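/- If G is an odd cycle of diamonds (a connected 3-regular graph on 4t vertices with t odd, in which every vertex lies in a diamond), then G has no color-blind distinguishing edge-coloring with any number of colors; that is, dal(G) = ∞. -/

import Mathlib

open Finset

/-- The color-blind partition of `v`: the multiset of (nonzero) counts of incident
edges of each color, i.e. the partition of `deg v` with trailing zeroes removed. -/
def cbp {V : Type*} [Fintype V] [DecidableEq V] (G : SimpleGraph V) [DecidableRel G.Adj]
    {k : ℕ} (c : Sym2 V → Fin k) (v : V) : Multiset ℕ :=
  (((Finset.univ : Finset (Fin k)).val.map fun i =>
    ((G.neighborFinset v).filter fun w => c s(v, w) = i).card).filter fun m => m ≠ 0)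

/-- `c` is a color-blind distinguishing edge-coloring of `G`. -/
def IsCBD {V : Type*} [Fintype V] [DecidableEq V] (G : SimpleGraph V) [DecidableRel G.Adj]
    {k : ℕ} (c : Sym2 V → Fin k) : Prop :=
  ∀ u v : V, G.Adj u v → cbp G c u ≠ cbp G c v

/-- Inside diamond `i` (vertices `(i,0)=x, (i,1)=y, (i,2)=z, (i,3)=w`) the diamond edges,
together with the connecting edge from `w` of diamond `i` to `x` of diamond `i+1 (mod t)`. -/
def diamondRel (t : ℕ) (p q : Fin t × Fin 4) : Prop :=
  (p.1 = q.1 ∧ (p.2.val, q.2.val) ∈ [(0,1),(0,2),(1,2),(1,3),(2,3)]) ∨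
  ((p.1.val + 1) % t = q.1.val ∧ p.2.val = 3 ∧ q.2.val = 0)

instance (t : ℕ) : DecidableRel (diamondRel t) := fun p q => by
  unfold diamondRel; infer_instance

/-- The cycle of `t` diamonds. For `t = 1` this is `K₄`. -/
def diamondCycle (t : ℕ) : SimpleGraph (Fin t × Fin 4) where
  Adj p q := p ≠ q ∧ (diamondRel t p q ∨ diamondRel t q p)
  symm := ⟨fun p q h => ⟨h.1.symm, h.2.symm⟩⟩
  loopless := ⟨fun p h => h.1 rfl⟩

instance (t : ℕ) : DecidableRel (diamondCycle t).Adj := fun p q =>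
  inferInstanceAs (Decidable (p ≠ q ∧ (diamondRel t p q ∨ diamondRel t q p)))

/-!
In a diamond `xyzw` the triangles `xyz` and `yzw` force `x, y, z` and `y, z, w` to have pairwise
distinct color-blind partitions. A cubic graph only has the three partitions `(3)`, `(2,1)`,
`(1,1,1)` available, so `x` and `w` share theirs, and it is not `(3)`: otherwise `x` and `w` are
monochromatic, so `y` and `z` see the same colors. Hence the partitions of the `x`-vertices take two
values, and consecutive ones differ because `w_i` is adjacent to `x_{i+1}`, which is impossible
around a cycle of odd length.
-/
namespace Multiset

theorem eq_of_sum_eq_three {s : Multiset ℕ} (hpos : ∀ m ∈ s, 0 < m) (hsum : s.sum = 3) :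
    s = {3} ∨ s = {2, 1} ∨ s = {1, 1, 1} := by
  have hcard : card s ≤ 3 := by
    simpa [hsum] using card_nsmul_le_sum (fun m hm => Nat.one_le_iff_ne_zero.mpr (hpos m hm).ne')
  interval_cases h : card s
  · simp_all
  · obtain ⟨a, rfl⟩ := card_eq_one.mp h
    simp_all
  · obtain ⟨a, b, rfl⟩ := card_eq_two.mp h
    simp only [insert_eq_cons, mem_cons, mem_singleton, forall_eq_or_imp, forall_eq, sum_cons,
      sum_singleton] at hpos hsum
    obtain ⟨rfl, rfl⟩ | ⟨rfl, rfl⟩ : (a = 2 ∧ b = 1) ∨ (a = 1 ∧ b = 2) := by omega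
    · simp
    · exact Or.inr (Or.inl (pair_comm 1 2))
  · obtain ⟨a, b, c, rfl⟩ := card_eq_three.mp h
    simp only [insert_eq_cons, mem_cons, mem_singleton, forall_eq_or_imp, forall_eq, sum_cons,
      sum_singleton] at hpos hsum
    obtain ⟨rfl, rfl, rfl⟩ : a = 1 ∧ b = 1 ∧ c = 1 := by omega
    simp

theorem sum_filter_ne_zero {M : Type*} [AddCommMonoid M] [DecidableEq M] (s : Multiset M) :
    (s.filter fun m => m ≠ 0).sum = s.sum := by
  rw [← sum_filter_add_sum_filter_not (fun m => m ≠ 0) (s := s),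
    sum_eq_zero fun m hm => not_not.mp (mem_filter.mp hm).2, add_zero]

end Multiset

theorem eq_of_mem_three_of_ne {α : Type*} {a b c x y z w : α}
    (hx : x = a ∨ x = b ∨ x = c) (hy : y = a ∨ y = b ∨ y = c)
    (hz : z = a ∨ z = b ∨ z = c) (hw : w = a ∨ w = b ∨ w = c)
    (hxy : x ≠ y) (hxz : x ≠ z) (hyz : y ≠ z) (hyw : y ≠ w) (hzw : z ≠ w) : x = w := by
  rcases hx with rfl | rfl | rfl <;> rcases hy with rfl | rfl | rfl <;>
    rcases hz with rfl | rfl | rfl <;> rcases hw with rfl | rfl | rfl <;> tauto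

theorem even_of_alternating {α : Type*} {a b : α} {f : ℕ → α} {n : ℕ}
    (hf : ∀ m, f m = a ∨ f m = b) (hstep : ∀ m, f (m + 1) ≠ f m) (hn : f n = f 0) : Even n := by
  suffices key : ∀ m, f m = f 0 ↔ Even m from (key n).mp hn
  intro m
  induction m with
  | zero => simp
  | succ m ih =>
    rw [Nat.even_add_one, ← ih]
    have hne := hstep m
    rcases hf m with h | h <;> rcases hf (m + 1) with h' | h' <;> rcases hf 0 with h0 | h0 <;>
      rw [h, h'] at hne <;> rw [h, h', h0] <;> tauto

section ColorBlind

variable {V : Type*} [Fintype V] [DecidableEq V] {G : SimpleGraph V} [DecidableRel G.Adj]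
  {k : ℕ} {c : Sym2 V → Fin k}

theorem pos_of_mem_cbp {v : V} {m : ℕ} (hm : m ∈ cbp G c v) : 0 < m :=
  Nat.pos_of_ne_zero (Multiset.mem_filter.mp hm).2

theorem sum_cbp (v : V) : (cbp G c v).sum = G.degree v := by
  rw [cbp, Multiset.sum_filter_ne_zero, ← G.card_neighborFinset_eq_degree,
    card_eq_sum_card_fiberwise (f := fun w => c s(v, w)) (t := univ) (fun _ _ => mem_univ _)]
  rfl

theorem cbp_eq_or_eq_or_eq_of_degree_eq_three {v : V} (hv : G.degree v = 3) :
    cbp G c v = {3} ∨ cbp G c v = {2, 1} ∨ cbp G c v = {1, 1, 1} :=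
  Multiset.eq_of_sum_eq_three (fun _ => pos_of_mem_cbp) (by rw [sum_cbp, hv])

theorem cbp_congr {u v : V}
    (h : ∀ i, #{w ∈ G.neighborFinset u | c s(u, w) = i} =
      #{w ∈ G.neighborFinset v | c s(v, w) = i}) :
    cbp G c u = cbp G c v := by
  simp only [cbp, h]

theorem color_eq_of_cbp_eq_singleton_degree {v a b : V} (h : cbp G c v = {G.degree v})
    (ha : G.Adj v a) (hb : G.Adj v b) : c s(v, a) = c s(v, b) := by
  have hmem : G.degree v ∈ cbp G c v := h ▸ Multiset.mem_singleton_self _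
  obtain ⟨i, -, hi⟩ := Multiset.mem_map.mp (Multiset.mem_filter.mp hmem).1
  rw [← G.card_neighborFinset_eq_degree, card_filter_eq_iff] at hi
  rw [hi a (by simpa using ha), hi b (by simpa using hb)]

theorem neighborFinset_eq_of_degree_eq_three {v a b d : V} (hv : G.degree v = 3)
    (ha : G.Adj v a) (hb : G.Adj v b) (hd : G.Adj v d) (hab : a ≠ b) (had : a ≠ d) (hbd : b ≠ d) :
    G.neighborFinset v = {a, b, d} := by
  refine (eq_of_subset_of_card_le ?_ ?_).symm
  · intro u hu
    simp only [mem_insert, mem_singleton] at hu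
    rcases hu with rfl | rfl | rfl <;> simpa
  · rw [G.card_neighborFinset_eq_degree, hv, card_eq_three.mpr ⟨a, b, d, hab, had, hbd, rfl⟩]

theorem cbp_eq_of_adj_of_common_neighbors {x y z w : V} (hxy : G.Adj x y) (hxz : G.Adj x z)
    (hyz : G.Adj y z) (hyw : G.Adj y w) (hzw : G.Adj z w) (hxw : x ≠ w)
    (hy : G.degree y = 3) (hz : G.degree z = 3)
    (hcx : c s(x, y) = c s(x, z)) (hcw : c s(y, w) = c s(z, w)) : cbp G c y = cbp G c z := by
  refine cbp_congr fun i => ?_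
  rw [neighborFinset_eq_of_degree_eq_three hy hxy.symm hyz hyw hxz.ne hxw hzw.ne,
    neighborFinset_eq_of_degree_eq_three hz hxz.symm hyz.symm hzw hxy.ne hxw hyw.ne,
    card_filter, card_filter, sum_insert (by simp [hxz.ne, hxw]), sum_insert (by simp [hzw.ne]),
    sum_insert (by simp [hxy.ne, hxw]), sum_insert (by simp [hyw.ne]), sum_singleton,
    sum_singleton, Sym2.eq_swap (a := y) (b := x), Sym2.eq_swap (a := z) (b := x),
    Sym2.eq_swap (a := z) (b := y), hcx, hcw]

theorem IsCBD.cbp_eq_of_diamond (hc : IsCBD G c) (hG : G.IsRegularOfDegree 3) {x y z w : V}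
    (hxy : G.Adj x y) (hxz : G.Adj x z) (hyz : G.Adj y z) (hyw : G.Adj y w) (hzw : G.Adj z w)
    (hxw : x ≠ w) : cbp G c x = cbp G c w ∧ (cbp G c x = {2, 1} ∨ cbp G c x = {1, 1, 1}) := by
  have hval : ∀ v, cbp G c v = {3} ∨ cbp G c v = {2, 1} ∨ cbp G c v = {1, 1, 1} :=
    fun v => cbp_eq_or_eq_or_eq_of_degree_eq_three (hG v)
  have hcbp_xw : cbp G c x = cbp G c w := eq_of_mem_three_of_ne (hval x) (hval y) (hval z) (hval w)
    (hc x y hxy) (hc x z hxz) (hc y z hyz) (hc y w hyw) (hc z w hzw)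
  refine ⟨hcbp_xw, (hval x).resolve_left fun hx3 => hc y z hyz ?_⟩
  have hx : cbp G c x = {G.degree x} := by rw [hx3, hG x]
  have hw : cbp G c w = {G.degree w} := by rw [← hcbp_xw, hx3, hG w]
  exact cbp_eq_of_adj_of_common_neighbors hxy hxz hyz hyw hzw hxw (hG y) (hG z)
    (color_eq_of_cbp_eq_singleton_degree hx hxy hxz)
    (by rw [Sym2.eq_swap, color_eq_of_cbp_eq_singleton_degree hw hyw.symm hzw.symm, Sym2.eq_swap])

end ColorBlind

namespace diamondCycle

variable {t : ℕ} [NeZero t]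

theorem val_add_one_mod_eq_iff {i j : Fin t} : (i.val + 1) % t = j.val ↔ i + 1 = j := by
  rw [Fin.ext_iff, Fin.val_add, Fin.val_one', Nat.add_mod_mod]

theorem adj_iff {i j : Fin t} {a b : Fin 4} :
    (diamondCycle t).Adj (i, a) (j, b) ↔
      (i = j ∧ a ≠ b ∧ ¬ (a = 0 ∧ b = 3) ∧ ¬ (a = 3 ∧ b = 0)) ∨
      (j = i + 1 ∧ a = 3 ∧ b = 0) ∨ (i = j + 1 ∧ a = 0 ∧ b = 3) := by
  simp only [diamondCycle, diamondRel, val_add_one_mod_eq_iff]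
  fin_cases a <;> fin_cases b <;> simp [eq_comm]

theorem neighborFinset_zero (i : Fin t) :
    (diamondCycle t).neighborFinset (i, 0) = {(i, 1), (i, 2), (i - 1, 3)} := by
  ext ⟨j, b⟩; fin_cases b <;> simp [adj_iff, eq_sub_iff_add_eq, eq_comm]

theorem neighborFinset_one (i : Fin t) :
    (diamondCycle t).neighborFinset (i, 1) = {(i, 0), (i, 2), (i, 3)} := by
  ext ⟨j, b⟩; fin_cases b <;> simp [adj_iff, eq_comm]

theorem neighborFinset_two (i : Fin t) :
    (diamondCycle t).neighborFinset (i, 2) = {(i, 0), (i, 1), (i, 3)} := by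
  ext ⟨j, b⟩; fin_cases b <;> simp [adj_iff, eq_comm]

theorem neighborFinset_three (i : Fin t) :
    (diamondCycle t).neighborFinset (i, 3) = {(i, 1), (i, 2), (i + 1, 0)} := by
  ext ⟨j, b⟩; fin_cases b <;> simp [adj_iff, eq_comm]

theorem isRegularOfDegree_three : (diamondCycle t).IsRegularOfDegree 3 := by
  rintro ⟨i, a⟩
  rw [← SimpleGraph.card_neighborFinset_eq_degree]
  match a with
  | 0 | 1 | 2 | 3 =>
    simp only [neighborFinset_zero, neighborFinset_one, neighborFinset_two, neighborFinset_three]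
    exact card_eq_three.mpr ⟨_, _, _, by simp, by simp, by simp, rfl⟩

end diamondCycle

theorem odd_cycle_of_diamonds_dal_infinite (t : ℕ) (hodd : Odd t) :
    ∀ k : ℕ, ¬ ∃ c : Sym2 (Fin t × Fin 4) → Fin k, IsCBD (diamondCycle t) c := by
  open diamondCycle Fin.NatCast in
  rintro k ⟨c, hc⟩
  have : NeZero t := ⟨hodd.pos.ne'⟩
  have hdiamond (i : Fin t) := hc.cbp_eq_of_diamond isRegularOfDegree_three
    (x := (i, 0)) (y := (i, 1)) (z := (i, 2)) (w := (i, 3))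
    (adj_iff.mpr (by simp)) (adj_iff.mpr (by simp)) (adj_iff.mpr (by simp))
    (adj_iff.mpr (by simp)) (adj_iff.mpr (by simp)) (by simp)
  refine Nat.not_even_iff_odd.mpr hodd
    (even_of_alternating (f := fun n => cbp (diamondCycle t) c ((n : Fin t), 0))
      (fun n => (hdiamond n).2)
      (fun n hn => hc (n, 3) ((n : Fin t) + 1, 0) (adj_iff.mpr (by simp)) ?_) (by simp))
  rw [← (hdiamond n).1, ← hn]
  simp
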